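/- arXiv:1802.06932 — 7 statements merged into one kernel-verified Lean document; each statement's English description precedes it below -/
import Mathlib

section
/- Let (Ω,𝒜,μ) be a σ-finite measure space with μ(Ω) = ∞. Let X ⊆ L¹(Ω)+L^∞(Ω) be a nonzero linear subspace with the following rearrangement-invariance property: whenever f ∈ X and g is a measurable function with μ{|g| > λ} ≤ μ{|f| > λ} for all λ > 0, then g ∈ X. Then X ⊆ R_μ if and only if the constant function 1 does not belong to X. -/
open MeasureTheory Filter Set
open scoped ENNReal Topology

variable {Ω : Type*} [MeasurableSpace Ω]

/-- Membership in `L¹(μ) + L^∞(μ)`: `f = g + h` with `g ∈ L¹`, `h ∈ L^∞`. -/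
def MemL1PlusLinf (μ : Measure Ω) (f : Ω → ℝ) : Prop :=
  ∃ g h : Ω → ℝ, MemLp g 1 μ ∧ MemLp h ⊤ μ ∧ f = g + h

/-- Membership in `R_μ = {f ∈ L¹+L^∞ : μ{|f| > λ} < ∞ for all λ > 0}`. -/
def MemRmu (μ : Measure Ω) (f : Ω → ℝ) : Prop :=
  MemL1PlusLinf μ f ∧ ∀ l : ℝ, 0 < l → μ {x | l < |f x|} < ⊤

/-- Membership in `L⁰_μ = {f : μ{|f| > λ} < ∞ for some λ > 0}`. -/
def MemL0mu (μ : Measure Ω) (f : Ω → ℝ) : Prop :=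
  ∃ l : ℝ, 0 < l ∧ μ {x | l < |f x|} < ⊤

/-- Almost uniform convergence of a sequence of functions. -/
def TendstoAU (μ : Measure Ω) (F : ℕ → Ω → ℝ) (f : Ω → ℝ) : Prop :=
  ∀ ε : ℝ, 0 < ε → ∃ E : Set Ω, MeasurableSet E ∧ μ Eᶜ ≤ ENNReal.ofReal ε ∧
    Tendsto (fun n => eLpNorm (E.indicator (f - F n)) ⊤ μ) atTop (𝓝 0)

/-- Dunford-Schwartz operator (at the level of measurable representatives):
a linear, measurability-preserving operator which is a contraction in both the
`L¹`- and the `L^∞`-norm. -/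
def IsDS (μ : Measure Ω) (T : (Ω → ℝ) → Ω → ℝ) : Prop :=
  (∀ f g : Ω → ℝ, T (f + g) = T f + T g) ∧
  (∀ (c : ℝ) (f : Ω → ℝ), T (c • f) = c • T f) ∧
  (∀ f : Ω → ℝ, Measurable f → Measurable (T f)) ∧
  (∀ f : Ω → ℝ, MemLp f 1 μ → eLpNorm (T f) 1 μ ≤ eLpNorm f 1 μ) ∧
  (∀ f : Ω → ℝ, MemLp f ⊤ μ → eLpNorm (T f) ⊤ μ ≤ eLpNorm f ⊤ μ)

/-- Cesàro averages `M_n(T)(f) = (1/n) ∑_{k=0}^{n-1} T^k f`. -/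
noncomputable def cesaro (T : (Ω → ℝ) → Ω → ℝ) (n : ℕ) (f : Ω → ℝ) : Ω → ℝ :=
  fun x => (∑ k ∈ Finset.range n, T^[k] f x) / n

/-! If `μ{|f| > l} = ∞` for some `f ∈ X` and `l > 0`, then `μ{|l⁻¹ f| > t} = ∞` for every
`t < 1`, while `{1 > t}` is empty for `t ≥ 1`; so the distribution function of the constant `1`
is dominated by that of `l⁻¹ • f`, and rearrangement invariance puts `1` into `X`.
Conversely `1 ∉ R_μ` because `μ(Ω) = ∞`. -/

theorem not_memRmu_const {μ : Measure Ω} (hμ : μ univ = ⊤) {c : ℝ} (hc : c ≠ 0) :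
    ¬ MemRmu μ (fun _ => c) := by
  intro hc_mem
  have hlevel : {x : Ω | |c| / 2 < |c|} = univ :=
    eq_univ_of_forall fun _ => half_lt_self (abs_pos.2 hc)
  have hfinite := hc_mem.2 (|c| / 2) (half_pos (abs_pos.2 hc))
  rw [hlevel, hμ] at hfinite
  exact lt_irrefl _ hfinite

theorem setOf_lt_abs_subset_setOf_lt_abs_inv_smul {α : Type*} (f : α → ℝ) {l t : ℝ}
    (hl : 0 < l) (ht : t ≤ 1) : {x | l < |f x|} ⊆ {x | t < |(l⁻¹ • f) x|} := by
  intro x hx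
  have hscaled : 1 < l⁻¹ * |f x| := by
    rw [inv_mul_eq_div, one_lt_div hl]
    exact hx
  simpa [abs_mul, abs_of_pos (inv_pos.2 hl)] using ht.trans_lt hscaled

theorem measure_lt_abs_one_le_of_measure_lt_abs_eq_top {μ : Measure Ω} {f : Ω → ℝ} {l : ℝ}
    (hl : 0 < l) (htop : μ {x | l < |f x|} = ⊤) (t : ℝ) :
    μ {_x : Ω | t < |(1 : ℝ)|} ≤ μ {x | t < |(l⁻¹ • f) x|} := by
  rcases le_or_gt 1 t with h1t | ht1
  · have hempty : {_x : Ω | t < |(1 : ℝ)|} = ∅ :=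
      eq_empty_of_forall_notMem fun _ hx => (abs_one (α := ℝ) ▸ hx : t < 1).not_ge h1t
    rw [hempty, measure_empty]
    exact bot_le
  · calc μ {_x : Ω | t < |(1 : ℝ)|} ≤ μ {x | l < |f x|} := htop ▸ le_top
      _ ≤ μ {x | t < |(l⁻¹ • f) x|} :=
        measure_mono (setOf_lt_abs_subset_setOf_lt_abs_inv_smul f hl ht1.le)

theorem stmt0_general (μ : Measure Ω) (hμ : μ Set.univ = ⊤)
    (X : Set (Ω → ℝ))
    (hsmul : ∀ (c : ℝ), ∀ f ∈ X, c • f ∈ X)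
    (hsub : ∀ f ∈ X, MemL1PlusLinf μ f)
    (hrearr : ∀ f ∈ X, ∀ g : Ω → ℝ, Measurable g →
      (∀ l : ℝ, 0 < l → μ {x | l < |g x|} ≤ μ {x | l < |f x|}) → g ∈ X) :
    (∀ f ∈ X, MemRmu μ f) ↔ (fun _ => (1 : ℝ)) ∉ X := by
  refine ⟨fun hX hone => not_memRmu_const hμ one_ne_zero (hX _ hone), fun hone f hf => ?_⟩
  refine ⟨hsub f hf, fun l hl => lt_top_iff_ne_top.2 fun htop => hone ?_⟩
  exact hrearr _ (hsmul l⁻¹ f hf) _ measurable_const fun t _ =>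
    measure_lt_abs_one_le_of_measure_lt_abs_eq_top hl htop t

/-- For a σ-finite measure space with `μ(Ω) = ∞` and a nonzero linear,
rearrangement-invariant subspace `X ⊆ L¹ + L^∞`, one has `X ⊆ R_μ` iff `1 ∉ X`. -/
theorem stmt0 (μ : Measure Ω) [SigmaFinite μ] (hμ : μ Set.univ = ⊤)
    (X : Set (Ω → ℝ))
    (hne : ∃ f ∈ X, f ≠ 0)
    (hadd : ∀ f ∈ X, ∀ g ∈ X, f + g ∈ X)
    (hsmul : ∀ (c : ℝ), ∀ f ∈ X, c • f ∈ X)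
    (hsub : ∀ f ∈ X, MemL1PlusLinf μ f)
    (hrearr : ∀ f ∈ X, ∀ g : Ω → ℝ, Measurable g →
      (∀ l : ℝ, 0 < l → μ {x | l < |g x|} ≤ μ {x | l < |f x|}) → g ∈ X) :
    (∀ f ∈ X, MemRmu μ f) ↔ (fun _ => (1 : ℝ)) ∉ X :=
  stmt0_general μ hμ X hsmul hsub hrearr
end

section
/- Let (Ω,𝒜,μ) be a σ-finite measure space, (X,‖·‖_X) a real Banach space, and M_n : X → L⁰_μ a sequence of linear maps such that the maximal function M*(f) = sup_n |M_n(f)| is finite a.e. for every f ∈ X. Assume the maximal operator M* is continuous at zero in measure, i.e., for all ε > 0 and δ > 0 there exists γ > 0 such that ‖f‖_X ≤ γ implies μ{M*(f) > δ} ≤ ε. Then the set X_c = {f ∈ X : the sequence (M_n(f)) converges almost uniformly} is closed in (X,‖·‖_X). -/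
/-!
Almost uniform convergence is equivalent to being almost uniformly Cauchy. If `f` is a limit of
points `f'` at which `(M_n f')` converges a.u., write `M_n f = M_n f' + M_n (f - f')`: the first
summand is a.u. Cauchy, and by continuity of `M*` at zero the second is uniformly `≤ δ` off a set
of measure `≤ ε`. Hence for every `ε, δ` the oscillation of `(M_n f)` is eventually `≤ 3δ` off a set
of measure `≤ 2ε`, and intersecting such sets along summable `ε_j` and `δ_j → 0` shows that
`(M_n f)` is a.u. Cauchy.
-/

open MeasureTheory Filter Set
open scoped ENNReal Topology

variable {Ω : Type*} [MeasurableSpace Ω]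

theorem ENNReal.tendsto_nhds_zero_iff_ofReal {α : Type*} {l : Filter α} {u : α → ℝ≥0∞} :
    Tendsto u l (𝓝 0) ↔ ∀ δ : ℝ, 0 < δ → ∀ᶠ a in l, u a ≤ ENNReal.ofReal δ := by
  rw [ENNReal.tendsto_nhds_zero]
  refine ⟨fun h δ hδ => h _ (ENNReal.ofReal_pos.2 hδ), fun h η hη => ?_⟩
  obtain ⟨δ, -, hδ, hδη⟩ := ENNReal.lt_iff_exists_real_btwn.1 hη
  exact (h δ (ENNReal.ofReal_pos.1 hδ)).mono fun a ha => ha.trans hδη.le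

section

variable {μ : Measure Ω}

theorem ae_eventually_of_eventually_ae {ι : Type*} [Countable ι] {l : Filter ι}
    {P : ι → Ω → Prop} (h : ∀ᶠ i in l, ∀ᵐ x ∂μ, P i x) : ∀ᵐ x ∂μ, ∀ᶠ i in l, P i x := by
  filter_upwards [(ae_ball_iff (Set.to_countable {i | ∀ᵐ x ∂μ, P i x})).2 fun _ hi => hi]
    with x hx
  exact h.mono hx

theorem eLpNorm_top_indicator_le_ofReal_iff {E : Set Ω} {f : Ω → ℝ} {δ : ℝ} (hδ : 0 ≤ δ) :
    eLpNorm (E.indicator f) ⊤ μ ≤ ENNReal.ofReal δ ↔ ∀ᵐ x ∂μ, x ∈ E → |f x| ≤ δ := by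
  have hind : ∀ x, ‖E.indicator f x‖ ≤ δ ↔ (x ∈ E → |f x| ≤ δ) := fun x => by
    by_cases hx : x ∈ E <;> simp [hx, hδ]
  rw [eLpNorm_exponent_top]
  refine ⟨fun h => ?_, fun h => eLpNormEssSup_le_of_ae_bound (h.mono fun x hx => (hind x).2 hx)⟩
  filter_upwards [ae_le_eLpNormEssSup (f := E.indicator f) (μ := μ)] with x hx
  rw [← hind, ← ENNReal.ofReal_le_ofReal_iff hδ, ofReal_norm]
  exact hx.trans h

theorem tendstoAU_iff {F : ℕ → Ω → ℝ} {g : Ω → ℝ} :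
    TendstoAU μ F g ↔ ∀ ε : ℝ, 0 < ε → ∃ E : Set Ω, MeasurableSet E ∧
      μ Eᶜ ≤ ENNReal.ofReal ε ∧
      ∀ δ : ℝ, 0 < δ → ∀ᶠ n in atTop, ∀ᵐ x ∂μ, x ∈ E → |g x - F n x| ≤ δ := by
  simp only [TendstoAU, ENNReal.tendsto_nhds_zero_iff_ofReal]
  refine forall₂_congr fun ε _ => exists_congr fun E => and_congr_right' <|
    and_congr_right' <| forall₂_congr fun δ hδ => ?_
  simp only [eLpNorm_top_indicator_le_ofReal_iff hδ.le, Pi.sub_apply]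

def IsAUCauchy (μ : Measure Ω) (F : ℕ → Ω → ℝ) : Prop :=
  ∀ ε : ℝ, 0 < ε → ∃ E : Set Ω, MeasurableSet E ∧ μ Eᶜ ≤ ENNReal.ofReal ε ∧
    ∀ δ : ℝ, 0 < δ → ∀ᶠ p : ℕ × ℕ in atTop, ∀ᵐ x ∂μ, x ∈ E → |F p.1 x - F p.2 x| ≤ δ

def IsAUCauchyUpTo (μ : Measure Ω) (F : ℕ → Ω → ℝ) (ε δ : ℝ) : Prop :=
  ∃ E : Set Ω, MeasurableSet E ∧ μ Eᶜ ≤ ENNReal.ofReal ε ∧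
    ∀ᶠ p : ℕ × ℕ in atTop, ∀ᵐ x ∂μ, x ∈ E → |F p.1 x - F p.2 x| ≤ δ

theorem TendstoAU.isAUCauchy {F : ℕ → Ω → ℝ} {g : Ω → ℝ} (h : TendstoAU μ F g) :
    IsAUCauchy μ F := by
  intro ε hε
  obtain ⟨E, hE, hμE, hconv⟩ := tendstoAU_iff.1 h ε hε
  refine ⟨E, hE, hμE, fun δ hδ => ?_⟩
  have hhalf := hconv (δ / 2) (half_pos hδ)
  rw [← prod_atTop_atTop_eq]
  filter_upwards [hhalf.prod_mk hhalf] with p ⟨hp₁, hp₂⟩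
  filter_upwards [hp₁, hp₂] with x hx₁ hx₂ hxE
  calc |F p.1 x - F p.2 x| ≤ |F p.1 x - g x| + |g x - F p.2 x| := abs_sub_le _ _ _
    _ ≤ δ / 2 + δ / 2 := by rw [abs_sub_comm]; exact add_le_add (hx₁ hxE) (hx₂ hxE)
    _ = δ := add_halves δ

theorem ae_cauchySeq_of_eventually_ae_le {F : ℕ → Ω → ℝ} {E : Set Ω}
    (h : ∀ δ : ℝ, 0 < δ → ∀ᶠ p : ℕ × ℕ in atTop, ∀ᵐ x ∂μ, x ∈ E → |F p.1 x - F p.2 x| ≤ δ) :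
    ∀ᵐ x ∂μ, x ∈ E → CauchySeq fun n => F n x := by
  have hae : ∀ᵐ x ∂μ, ∀ j : ℕ, ∀ᶠ p : ℕ × ℕ in atTop,
      x ∈ E → |F p.1 x - F p.2 x| ≤ 1 / (j + 1) :=
    ae_all_iff.2 fun j => ae_eventually_of_eventually_ae (h _ Nat.one_div_pos_of_nat)
  filter_upwards [hae] with x hx hxE
  refine Metric.cauchySeq_iff.2 fun δ hδ => ?_
  obtain ⟨j, hj⟩ := exists_nat_one_div_lt hδ
  obtain ⟨N, hN⟩ := eventually_atTop_prod_self'.1 (hx j)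
  exact ⟨N, fun m hm n hn => (hN m hm n hn hxE).trans_lt hj⟩

theorem IsAUCauchy.tendstoAU {F : ℕ → Ω → ℝ} (h : IsAUCauchy μ F) :
    TendstoAU μ F fun x => limUnder atTop fun n => F n x := by
  refine tendstoAU_iff.2 fun ε hε => ?_
  obtain ⟨E, hE, hμE, hcauchy⟩ := h ε hε
  refine ⟨E, hE, hμE, fun δ hδ => ?_⟩
  obtain ⟨N, hN⟩ := eventually_atTop_prod_self'.1 (hcauchy δ hδ)
  filter_upwards [eventually_ge_atTop N] with n hn
  have hclose : ∀ᵐ x ∂μ, ∀ᶠ m in atTop, x ∈ E → |F n x - F m x| ≤ δ :=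
    ae_eventually_of_eventually_ae (eventually_atTop.2 ⟨N, hN n hn⟩)
  filter_upwards [hclose, ae_cauchySeq_of_eventually_ae_le hcauchy] with x hx hx_cauchy hxE
  rw [abs_sub_comm]
  exact le_of_tendsto ((hx_cauchy hxE).tendsto_limUnder.const_sub _).abs
    (hx.mono fun _ hm => hm hxE)

theorem isAUCauchy_of_forall_isAUCauchyUpTo {F : ℕ → Ω → ℝ}
    (h : ∀ ε δ : ℝ, 0 < ε → 0 < δ → IsAUCauchyUpTo μ F ε δ) : IsAUCauchy μ F := by
  intro ε hε
  obtain ⟨ε', hε', hsum⟩ :=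
    ENNReal.exists_pos_sum_of_countable (ENNReal.ofReal_pos.2 hε).ne' ℕ
  choose E hE hμE hcauchy using fun j : ℕ =>
    h (ε' j) (1 / (j + 1)) (NNReal.coe_pos.2 (hε' j)) Nat.one_div_pos_of_nat
  refine ⟨⋂ j, E j, .iInter hE, ?_, fun δ hδ => ?_⟩
  · calc μ (⋂ j, E j)ᶜ = μ (⋃ j, (E j)ᶜ) := by rw [compl_iInter]
      _ ≤ ∑' j, μ (E j)ᶜ := measure_iUnion_le _
      _ ≤ ∑' j, (ε' j : ℝ≥0∞) :=
        ENNReal.tsum_le_tsum fun j => (hμE j).trans_eq ENNReal.ofReal_coe_nnreal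
      _ ≤ ENNReal.ofReal ε := hsum.le
  · obtain ⟨j, hj⟩ := exists_nat_one_div_lt hδ
    filter_upwards [hcauchy j] with p hp
    filter_upwards [hp] with x hx hxE
    exact (hx (mem_iInter.1 hxE j)).trans hj.le

theorem IsAUCauchy.isAUCauchyUpTo_add {F G H : ℕ → Ω → ℝ} (hG : IsAUCauchy μ G)
    (hF : ∀ n, F n = G n + H n) (hH : ∀ᵐ x ∂μ, BddAbove (range fun n => |H n x|))
    {ε δ : ℝ} (hε : 0 < ε) (hδ : 0 < δ) (hsmall : μ {x | δ < ⨆ n, |H n x|} ≤ ENNReal.ofReal ε) :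
    IsAUCauchyUpTo μ F (2 * ε) (3 * δ) := by
  set A := {x | δ < ⨆ n, |H n x|}
  obtain ⟨E, hE, hμE, hcauchy⟩ := hG ε hε
  refine ⟨E ∩ (toMeasurable μ A)ᶜ, hE.inter (measurableSet_toMeasurable μ A).compl, ?_, ?_⟩
  · calc μ (E ∩ (toMeasurable μ A)ᶜ)ᶜ = μ (Eᶜ ∪ toMeasurable μ A) := by
          rw [compl_inter, compl_compl]
      _ ≤ μ Eᶜ + μ (toMeasurable μ A) := measure_union_le _ _
      _ ≤ ENNReal.ofReal ε + ENNReal.ofReal ε := by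
          rw [measure_toMeasurable]; exact add_le_add hμE hsmall
      _ = ENNReal.ofReal (2 * ε) := by rw [← ENNReal.ofReal_add hε.le hε.le, two_mul]
  · filter_upwards [hcauchy δ hδ] with p hp
    filter_upwards [hp, hH] with x hx hbdd ⟨hxE, hxA⟩
    have hHle : ∀ n, |H n x| ≤ δ := fun n =>
      (le_ciSup hbdd n).trans (not_lt.1 fun hlt => hxA (subset_toMeasurable μ A hlt))
    have hGp := hx hxE
    have hH₁ := hHle p.1
    have hH₂ := hHle p.2
    rw [hF, hF, Pi.add_apply, Pi.add_apply]
    rw [abs_le] at hGp hH₁ hH₂ ⊢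
    constructor <;> linarith [hGp.1, hGp.2, hH₁.1, hH₁.2, hH₂.1, hH₂.2]

end

theorem stmt3_general (μ : Measure Ω)
    {X : Type*} [NormedAddCommGroup X] [NormedSpace ℝ X]
    (M : ℕ → X →ₗ[ℝ] (Ω → ℝ))
    (hfin : ∀ f : X, ∀ᵐ x ∂μ, BddAbove (Set.range fun n => |M n f x|))
    (hcont : ∀ ε δ : ℝ, 0 < ε → 0 < δ → ∃ γ : ℝ, 0 < γ ∧ ∀ f : X, ‖f‖ ≤ γ →
      μ {x | δ < ⨆ n, |M n f x|} ≤ ENNReal.ofReal ε) :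
    IsClosed {f : X | ∃ g : Ω → ℝ, TendstoAU μ (fun n => M n f) g} := by
  refine isClosed_of_closure_subset fun f hf => ⟨_, IsAUCauchy.tendstoAU ?_⟩
  refine isAUCauchy_of_forall_isAUCauchyUpTo fun ε δ hε hδ => ?_
  obtain ⟨γ, hγ, hsmall⟩ := hcont (ε / 2) (δ / 3) (half_pos hε) (by positivity)
  obtain ⟨f', ⟨g', hg'⟩, hff'⟩ := Metric.mem_closure_iff.1 hf γ hγ
  have hsplit : ∀ n, M n f = M n f' + M n (f - f') := fun n => by rw [← map_add, add_sub_cancel]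
  have h := hg'.isAUCauchy.isAUCauchyUpTo_add hsplit (hfin (f - f')) (half_pos hε)
    (by positivity) (hsmall _ (by rw [← dist_eq_norm]; exact hff'.le))
  rwa [mul_div_cancel₀ _ two_ne_zero, mul_div_cancel₀ _ three_ne_zero] at h

/-- If the maximal operator `M*` of a sequence of linear maps
`M_n : X → L⁰_μ` (with `M*(f) < ∞` a.e.) is continuous at zero in measure, then
the set of `f ∈ X` for which `(M_n(f))` converges a.u. is closed in `X`. -/
theorem stmt3 (μ : Measure Ω) [SigmaFinite μ]
    {X : Type*} [NormedAddCommGroup X] [NormedSpace ℝ X] [CompleteSpace X]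
    (M : ℕ → X →ₗ[ℝ] (Ω → ℝ))
    (hmeas : ∀ (n : ℕ) (f : X), Measurable (M n f))
    (hL0 : ∀ (n : ℕ) (f : X), MemL0mu μ (M n f))
    (hfin : ∀ f : X, ∀ᵐ x ∂μ, BddAbove (Set.range fun n => |M n f x|))
    (hcont : ∀ ε δ : ℝ, 0 < ε → 0 < δ → ∃ γ : ℝ, 0 < γ ∧ ∀ f : X, ‖f‖ ≤ γ →
      μ {x | δ < ⨆ n, |M n f x|} ≤ ENNReal.ofReal ε) :
    IsClosed {f : X | ∃ g : Ω → ℝ, TendstoAU μ (fun n => M n f) g} :=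
  stmt3_general μ M hfin hcont
end

section
/- (Hopf's maximal ergodic theorem.) Let (Ω,𝒜,μ) be a σ-finite measure space and let T : L¹(Ω) → L¹(Ω) be a positive linear contraction (i.e., T is linear, T(f) ≥ 0 a.e. whenever f ≥ 0 a.e., and ‖T f‖₁ ≤ ‖f‖₁ for all f ∈ L¹). Then for every f ∈ L¹(Ω), ∫_{{sup_{n≥1} M_n(T)(f) > 0}} f dμ ≥ 0, where M_n(T)(f) = (1/n) ∑_{k=0}^{n-1} T^k(f). -/
open MeasureTheory Filter Set
open scoped ENNReal Topology

variable {Ω : Type*} [MeasurableSpace Ω]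

/-!
Garsia's proof. With `Sₖ = ∑_{j<k} T^j f` and `Gₙ = max (S₀, …, Sₙ) ≥ 0`, positivity of `T` gives
`S_{k+1} = f + T Sₖ ≤ f + T Gₙ` for `k < n`, hence `Gₙ ≤ f + T Gₙ` on `{Gₙ > 0}`. Integrating there,
`∫_{Gₙ > 0} f ≥ ∫ Gₙ - ∫ T Gₙ ≥ 0`, because `Gₙ` vanishes off `{Gₙ > 0}`, `T Gₙ ≥ 0` and `T` is an
`L¹`-contraction. The sets `{Gₙ > 0}` increase to `{x | ∃ n, 0 < Mₙ(T)(f) x}`.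
-/

open Finset

theorem sum_range_succ_iterate {M : Type*} [AddCommMonoid M] (T : M →+ M) (f : M) (n : ℕ) :
    ∑ k ∈ range (n + 1), T^[k] f = f + T (∑ k ∈ range n, T^[k] f) := by
  rw [sum_range_succ', map_sum]
  simp only [← Function.iterate_succ_apply' T, Function.iterate_zero_apply, add_comm]

noncomputable def maxPartialSum {α : Type*} (T : (α → ℝ) → α → ℝ) (f : α → ℝ) (n : ℕ) : α → ℝ :=
  (range (n + 1)).sup' nonempty_range_add_one fun k => ∑ j ∈ range k, T^[j] f

section MaxPartialSum

variable {α : Type*} (T : (α → ℝ) → α → ℝ) (f : α → ℝ)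

theorem sum_range_iterate_le_maxPartialSum {n k : ℕ} (hk : k ≤ n) :
    ∑ j ∈ range k, T^[j] f ≤ maxPartialSum T f n :=
  le_sup' (fun k => ∑ j ∈ range k, T^[j] f) (mem_range_succ_iff.mpr hk)

theorem maxPartialSum_nonneg (n : ℕ) : 0 ≤ maxPartialSum T f n := by
  simpa using sum_range_iterate_le_maxPartialSum T f (Nat.zero_le n)

theorem maxPartialSum_mono : Monotone (maxPartialSum T f) := fun _ _ hmn =>
  sup'_mono _ (range_subset_range.mpr (Nat.succ_le_succ hmn)) _

theorem exists_maxPartialSum_eq_of_pos {n : ℕ} {x : α} (hx : 0 < maxPartialSum T f n x) :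
    ∃ k < n, maxPartialSum T f n x = (∑ j ∈ range (k + 1), T^[j] f) x := by
  obtain ⟨k, hk, heq⟩ := exists_mem_eq_sup' (nonempty_range_add_one (n := n))
    (fun k => ∑ j ∈ range k, T^[j] f x)
  rw [maxPartialSum, Finset.sup'_apply] at hx ⊢
  obtain _ | k := k
  · simp [heq] at hx
  · exact ⟨k, by simpa using hk, by simpa using heq⟩

theorem setOf_exists_cesaro_pos :
    {x | ∃ n : ℕ, 0 < cesaro T (n + 1) f x} = ⋃ n, {x | 0 < maxPartialSum T f n x} := by
  ext x
  simp only [cesaro, mem_ofPred_eq, mem_iUnion,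
    div_pos_iff_of_pos_right (Nat.cast_pos.mpr (Nat.succ_pos _))]
  constructor
  · rintro ⟨n, hn⟩
    refine ⟨n + 1, hn.trans_le ?_⟩
    simpa using sum_range_iterate_le_maxPartialSum T f le_rfl x
  · rintro ⟨n, hn⟩
    obtain ⟨k, -, hk⟩ := exists_maxPartialSum_eq_of_pos T f hn
    rw [hk, Finset.sum_apply] at hn
    exact ⟨k, hn⟩

end MaxPartialSum

section Integrals

variable {α : Type*} [MeasurableSpace α] {μ : Measure α}

theorem integral_le_integral_of_eLpNorm_one_le {g h : α → ℝ} (hg : Integrable g μ)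
    (hg_nonneg : 0 ≤ᵐ[μ] g) (hh : AEStronglyMeasurable h μ)
    (hgh : eLpNorm h 1 μ ≤ eLpNorm g 1 μ) : ∫ x, h x ∂μ ≤ ∫ x, g x ∂μ :=
  calc ∫ x, h x ∂μ ≤ ∫ x, ‖h x‖ ∂μ := (le_abs_self _).trans (norm_integral_le_integral_norm h)
    _ = (eLpNorm h 1 μ).toReal := by
      rw [integral_norm_eq_lintegral_enorm hh, eLpNorm_one_eq_lintegral_enorm]
    _ ≤ (eLpNorm g 1 μ).toReal :=
      ENNReal.toReal_mono (memLp_one_iff_integrable.mpr hg).eLpNorm_ne_top hgh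
    _ = ∫ x, ‖g x‖ ∂μ := by
      rw [integral_norm_eq_lintegral_enorm hg.aestronglyMeasurable, eLpNorm_one_eq_lintegral_enorm]
    _ = ∫ x, g x ∂μ := integral_congr_ae (hg_nonneg.mono fun _ hx => Real.norm_of_nonneg hx)

section MemLp

variable {p : ENNReal} {T : (α → ℝ) → α → ℝ} (hT : ∀ g, MemLp g p μ → MemLp (T g) p μ)
  {f : α → ℝ} (hf : MemLp f p μ)
include hT hf

theorem memLp_maxPartialSum (n : ℕ) : MemLp (maxPartialSum T f n) p μ :=
  sup'_induction (p := (MemLp · p μ)) _ _ (fun _ h₁ _ h₂ => h₁.sup h₂) fun _ _ =>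
    memLp_finsetSum' _ fun k _ => Function.Iterate.rec (MemLp · p μ) hf hT k

theorem nullMeasurableSet_maxPartialSum_pos (n : ℕ) :
    NullMeasurableSet {x | 0 < maxPartialSum T f n x} μ :=
  nullMeasurableSet_lt aemeasurable_const
    (memLp_maxPartialSum hT hf n).aestronglyMeasurable.aemeasurable

end MemLp

variable (T : (α → ℝ) →+ (α → ℝ))
  (hpos : ∀ g : α → ℝ, (∀ᵐ x ∂μ, 0 ≤ g x) → ∀ᵐ x ∂μ, 0 ≤ T g x)
include hpos

theorem ae_apply_le_apply_of_ae_le {g h : α → ℝ} (hgh : g ≤ᵐ[μ] h) :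
    ∀ᵐ x ∂μ, T g x ≤ T h x := by
  filter_upwards [hpos (h - g) (hgh.mono fun _ hx => sub_nonneg.mpr hx)] with x hx
  simpa using hx

theorem ae_maxPartialSum_le_add (f : α → ℝ) (n : ℕ) :
    ∀ᵐ x ∂μ, 0 < maxPartialSum T f n x →
      maxPartialSum T f n x ≤ f x + T (maxPartialSum T f n) x := by
  have hle : ∀ᵐ x ∂μ, ∀ k ∈ range n,
      T (∑ j ∈ range k, T^[j] f) x ≤ T (maxPartialSum T f n) x :=
    (eventually_all_finset _).mpr fun k hk => ae_apply_le_apply_of_ae_le T hpos <|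
      ae_of_all _ (sum_range_iterate_le_maxPartialSum T f (mem_range.mp hk).le)
  filter_upwards [hle] with x hx hGx
  obtain ⟨k, hk, heq⟩ := exists_maxPartialSum_eq_of_pos T f hGx
  rw [heq, sum_range_succ_iterate, Pi.add_apply]
  exact (add_le_add_iff_left _).mpr (hx k (mem_range.mpr hk))

theorem setIntegral_maxPartialSum_pos_nonneg
    (hL1 : ∀ g : α → ℝ, MemLp g 1 μ → MemLp (T g) 1 μ ∧ eLpNorm (T g) 1 μ ≤ eLpNorm g 1 μ)
    {f : α → ℝ} (hf : MemLp f 1 μ) (n : ℕ) :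
    0 ≤ ∫ x in {x | 0 < maxPartialSum T f n x}, f x ∂μ := by
  set G := maxPartialSum T f n
  have hT : ∀ g, MemLp g 1 μ → MemLp (T g) 1 μ := fun g hg => (hL1 g hg).1
  have hG_mem : MemLp G 1 μ := memLp_maxPartialSum hT hf n
  have hG : Integrable G μ := memLp_one_iff_integrable.mp hG_mem
  have hTG : Integrable (T G) μ := memLp_one_iff_integrable.mp (hL1 G hG_mem).1
  have hG_nonneg : 0 ≤ G := maxPartialSum_nonneg T f n
  calc 0 ≤ ∫ x, G x ∂μ - ∫ x, T G x ∂μ :=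
        sub_nonneg.mpr <| integral_le_integral_of_eLpNorm_one_le hG (ae_of_all _ hG_nonneg)
          hTG.aestronglyMeasurable (hL1 G hG_mem).2
    _ ≤ ∫ x in {x | 0 < G x}, G x ∂μ - ∫ x in {x | 0 < G x}, T G x ∂μ := by
      rw [setIntegral_eq_integral_of_forall_compl_eq_zero (s := {x | 0 < G x}) fun x hx =>
        (hG_nonneg x).antisymm' (not_lt.mp hx)]
      exact sub_le_sub_left (setIntegral_le_integral hTG (hpos G (ae_of_all _ hG_nonneg))) _
    _ = ∫ x in {x | 0 < G x}, G x - T G x ∂μ :=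
      (integral_sub hG.integrableOn hTG.integrableOn).symm
    _ ≤ ∫ x in {x | 0 < G x}, f x ∂μ := by
      have hE := nullMeasurableSet_maxPartialSum_pos hT hf n
      refine setIntegral_mono_ae_restrict (hG.sub hTG).integrableOn
        (memLp_one_iff_integrable.mp hf).integrableOn ?_
      filter_upwards [(ae_restrict_iff'₀ hE).mpr (ae_maxPartialSum_le_add T hpos f n)] with x hx
      linarith

end Integrals

theorem stmt4_general (μ : Measure Ω) (T : (Ω → ℝ) → Ω → ℝ)
    (hadd : ∀ f g : Ω → ℝ, T (f + g) = T f + T g)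
    (hpos : ∀ f : Ω → ℝ, (∀ᵐ x ∂μ, 0 ≤ f x) → ∀ᵐ x ∂μ, 0 ≤ T f x)
    (hL1 : ∀ f : Ω → ℝ, MemLp f 1 μ →
      MemLp (T f) 1 μ ∧ eLpNorm (T f) 1 μ ≤ eLpNorm f 1 μ)
    (f : Ω → ℝ) (hf1 : MemLp f 1 μ) :
    0 ≤ ∫ x in {x | ∃ n : ℕ, 0 < cesaro T (n + 1) f x}, f x ∂μ := by
  rw [setOf_exists_cesaro_pos]
  have hE_mono : Monotone fun n => {x | 0 < maxPartialSum T f n x} :=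
    fun _ _ hmn _ hx => hx.trans_le (maxPartialSum_mono T f hmn _)
  exact ge_of_tendsto'
    (tendsto_setIntegral_of_monotone₀
      (nullMeasurableSet_maxPartialSum_pos (fun g hg => (hL1 g hg).1) hf1) hE_mono
      (memLp_one_iff_integrable.mp hf1).integrableOn)
    (setIntegral_maxPartialSum_pos_nonneg (AddMonoidHom.mk' T hadd) hpos hL1 hf1)

/-- Hopf's maximal ergodic theorem: for a positive linear contraction
`T` of `L¹` and `f ∈ L¹`, `∫_{sup_{n≥1} M_n(T)(f) > 0} f dμ ≥ 0`. -/
theorem stmt4 (μ : Measure Ω) [SigmaFinite μ] (T : (Ω → ℝ) → Ω → ℝ)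
    (hadd : ∀ f g : Ω → ℝ, T (f + g) = T f + T g)
    (hsmul : ∀ (c : ℝ) (f : Ω → ℝ), T (c • f) = c • T f)
    (hmeas : ∀ f : Ω → ℝ, Measurable f → Measurable (T f))
    (hpos : ∀ f : Ω → ℝ, (∀ᵐ x ∂μ, 0 ≤ f x) → ∀ᵐ x ∂μ, 0 ≤ T f x)
    (hL1 : ∀ f : Ω → ℝ, MemLp f 1 μ →
      MemLp (T f) 1 μ ∧ eLpNorm (T f) 1 μ ≤ eLpNorm f 1 μ)
    (f : Ω → ℝ) (hf : Measurable f) (hf1 : MemLp f 1 μ) :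
    0 ≤ ∫ x in {x | ∃ n : ℕ, 0 < cesaro T (n + 1) f x}, f x ∂μ :=
  stmt4_general μ T hadd hpos hL1 f hf1
end

section
/- Let (Ω,𝒜,μ) be a σ-finite measure space and let T be a positive Dunford–Schwartz operator on (Ω,μ). Then for every f ∈ L¹(Ω) and every λ > 0, μ{ sup_{n≥1} M_n(T)(|f|) > λ } ≤ ‖f‖₁ / λ. -/
open MeasureTheory Filter Set
open scoped ENNReal Topology

variable {Ω : Type*} [MeasurableSpace Ω]

/-
Hopf's maximal ergodic lemma: for integrable `h`, let `S n = ∑_{k<n} T^k h` and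
`Φ = max_{n ≤ N} S n ≥ 0`. Where `Φ > 0` the maximum is some `S (n+1) = h + T (S n) ≤ h + T Φ`
by positivity, so `∫_{Φ>0} h ≥ ∫ Φ - ∫ |T Φ| ≥ 0` by the `L¹`-contraction property.
Apply this to `h = g - λ 1_E` with `E = {∃ n ≤ N, M_{n+1} g > λ}`. The `L^∞`-contraction gives
`S n 1_E ≤ n`, so `S (n+1) h > 0` wherever `M_{n+1} g > λ`; thus `E ⊆ {Φ > 0}` a.e. and
`λ μ(E) ≤ ∫_{Φ>0} g ≤ ‖g‖₁`. Finally let `N → ∞`.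
-/

open Finset

lemma Module.End.sum_pow_succ_apply {R M : Type*} [Semiring R] [AddCommMonoid M] [Module R M]
    (T : Module.End R M) (n : ℕ) (f : M) :
    (∑ k ∈ range (n + 1), T ^ k) f = f + T ((∑ k ∈ range n, T ^ k) f) := by
  rw [geom_sum_succ, LinearMap.add_apply, Module.End.mul_apply, Module.End.one_apply, add_comm]

lemma cesaro_eq_sum_pow_apply {α : Type*} (T : Module.End ℝ (α → ℝ)) (n : ℕ) (f : α → ℝ) :
    cesaro T n f = fun x => (∑ k ∈ range n, T ^ k) f x / n := by
  ext x
  simp [cesaro, Module.End.coe_pow]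

lemma integral_norm_le_of_eLpNorm_one_le {E : Type*} [NormedAddCommGroup E] {μ : Measure Ω}
    {f g : Ω → E} (hg : AEStronglyMeasurable g μ) (hf : Integrable f μ)
    (h : eLpNorm g 1 μ ≤ eLpNorm f 1 μ) : ∫ x, ‖g x‖ ∂μ ≤ ∫ x, ‖f x‖ ∂μ := by
  rw [← lpNorm_one_eq_integral_norm hg, ← lpNorm_one_eq_integral_norm hf.1,
    ← toReal_eLpNorm hg, ← toReal_eLpNorm hf.1]
  exact ENNReal.toReal_mono (memLp_one_iff_integrable.2 hf).eLpNorm_ne_top h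

section Operator
variable {μ : Measure Ω} {T : Module.End ℝ (Ω → ℝ)}

lemma measurable_sum_pow_apply (hmeas : ∀ f, Measurable f → Measurable (T f))
    {f : Ω → ℝ} (hf : Measurable f) (n : ℕ) : Measurable ((∑ k ∈ range n, T ^ k) f) := by
  rw [LinearMap.sum_apply, Finset.sum_fn]
  refine Finset.measurable_sum _ fun k _ => ?_
  rw [Module.End.coe_pow]
  exact Function.Iterate.rec Measurable hf hmeas k

lemma integrable_sum_pow_apply (hmeas : ∀ f, Measurable f → Measurable (T f))
    (hL1 : ∀ f, MemLp f 1 μ → eLpNorm (T f) 1 μ ≤ eLpNorm f 1 μ)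
    {f : Ω → ℝ} (hf : Measurable f) (hfi : Integrable f μ) (n : ℕ) :
    Integrable ((∑ k ∈ range n, T ^ k) f) μ := by
  have step (g : Ω → ℝ) (hg : Measurable g ∧ MemLp g 1 μ) :
      Measurable (T g) ∧ MemLp (T g) 1 μ :=
    ⟨hmeas g hg.1, (hmeas g hg.1).aestronglyMeasurable, (hL1 g hg.2).trans_lt hg.2.2⟩
  rw [LinearMap.sum_apply]
  refine integrable_finsetSum' _ fun k _ => ?_
  rw [Module.End.coe_pow, ← memLp_one_iff_integrable]
  exact (Function.Iterate.rec (fun g => Measurable g ∧ MemLp g 1 μ)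
    ⟨hf, memLp_one_iff_integrable.2 hfi⟩ step k).2

lemma ae_sum_pow_apply_le (hmeas : ∀ f, Measurable f → Measurable (T f))
    (hLinf : ∀ f, MemLp f ⊤ μ → eLpNorm (T f) ⊤ μ ≤ eLpNorm f ⊤ μ)
    {f : Ω → ℝ} (hf : Measurable f) (hf1 : ∀ x, |f x| ≤ 1) :
    ∀ᵐ x ∂μ, ∀ n : ℕ, (∑ k ∈ range n, T ^ k) f x ≤ n := by
  have step (g : Ω → ℝ) (hg : Measurable g ∧ eLpNorm g ⊤ μ ≤ 1) :
      Measurable (T g) ∧ eLpNorm (T g) ⊤ μ ≤ 1 :=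
    ⟨hmeas g hg.1,
      (hLinf g ⟨hg.1.aestronglyMeasurable, hg.2.trans_lt ENNReal.one_lt_top⟩).trans hg.2⟩
  have hf_top : eLpNorm f ⊤ μ ≤ 1 := by
    rw [eLpNorm_exponent_top, ← ENNReal.ofReal_one]
    exact eLpNormEssSup_le_of_ae_bound (ae_of_all _ hf1)
  have hiter : ∀ᵐ x ∂μ, ∀ k, (⇑T)^[k] f x ≤ 1 := by
    refine ae_all_iff.2 fun k => ?_
    have hk := (Function.Iterate.rec (fun g => Measurable g ∧ eLpNorm g ⊤ μ ≤ 1) ⟨hf, hf_top⟩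
      step k).2
    rw [eLpNorm_exponent_top] at hk
    filter_upwards [ae_le_eLpNormEssSup (f := (⇑T)^[k] f) (μ := μ)] with x hx
    rw [Real.enorm_eq_ofReal_abs] at hx
    exact (le_abs_self _).trans (ENNReal.ofReal_le_one.1 (hx.trans hk))
  filter_upwards [hiter] with x hx n
  rw [LinearMap.sum_apply, Finset.sum_apply]
  simpa [Module.End.pow_apply] using Finset.sum_le_sum fun k (_ : k ∈ range n) => hx k

lemma ae_le_apply_of_ae_le (hpos : ∀ f : Ω → ℝ, (∀ᵐ x ∂μ, 0 ≤ f x) → ∀ᵐ x ∂μ, 0 ≤ T f x)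
    {f g : Ω → ℝ} (hfg : ∀ᵐ x ∂μ, f x ≤ g x) : ∀ᵐ x ∂μ, T f x ≤ T g x := by
  filter_upwards [hpos (g - f) (by filter_upwards [hfg] with x hx using sub_nonneg.2 hx)] with x hx
  simpa using hx

lemma ae_partialSups_sum_pow_apply_le_add
    (hpos : ∀ f : Ω → ℝ, (∀ᵐ x ∂μ, 0 ≤ f x) → ∀ᵐ x ∂μ, 0 ≤ T f x) (h : Ω → ℝ) (N : ℕ) :
    ∀ᵐ x ∂μ, 0 < partialSups (fun n => (∑ k ∈ range n, T ^ k) h) N x →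
      partialSups (fun n => (∑ k ∈ range n, T ^ k) h) N x ≤
        h x + T (partialSups (fun n => (∑ k ∈ range n, T ^ k) h) N) x := by
  set S := fun n => (∑ k ∈ range n, T ^ k) h
  have hTS : ∀ᵐ x ∂μ, ∀ n ∈ range N, T (S n) x ≤ T (partialSups S N) x :=
    (eventually_all_finset _).2 fun n hn =>
      ae_le_apply_of_ae_le hpos (ae_of_all _ (le_partialSups_of_le S (mem_range.1 hn).le))
  filter_upwards [hTS] with x hx hxpos
  obtain ⟨j, hjN, hj⟩ := exists_partialSups_eq (S · x) N
  rw [← Pi.partialSups_apply] at hj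
  rcases j with _ | n
  · rw [hj] at hxpos
    simp [S] at hxpos
  · rw [hj, show S (n + 1) = h + T (S n) from T.sum_pow_succ_apply n h, Pi.add_apply]
    exact add_le_add_right (hx n (mem_range.2 hjN)) _

theorem hopf_maximal_ergodic (hmeas : ∀ f, Measurable f → Measurable (T f))
    (hL1 : ∀ f, MemLp f 1 μ → eLpNorm (T f) 1 μ ≤ eLpNorm f 1 μ)
    (hpos : ∀ f : Ω → ℝ, (∀ᵐ x ∂μ, 0 ≤ f x) → ∀ᵐ x ∂μ, 0 ≤ T f x)
    {h : Ω → ℝ} (hm : Measurable h) (hi : Integrable h μ) (N : ℕ) :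
    0 ≤ ∫ x in {x | 0 < partialSups (fun n => (∑ k ∈ range n, T ^ k) h) N x}, h x ∂μ := by
  set S := fun n => (∑ k ∈ range n, T ^ k) h
  set Φ := partialSups S N with hΦ
  set F := {x | 0 < Φ x}
  have hΦm : Measurable Φ := by
    rw [hΦ, partialSups_apply]
    exact Finset.measurable_sup' _ fun n _ => measurable_sum_pow_apply hmeas hm n
  have hΦi : Integrable Φ μ := by
    rw [hΦ, partialSups_apply]
    exact Finset.sup'_induction (p := fun g : Ω → ℝ => Integrable g μ) _ _
      (fun _ ha _ hb => ha.sup hb) fun n _ => integrable_sum_pow_apply hmeas hL1 hm hi n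
  have hΦ_nonneg : 0 ≤ Φ :=
    calc 0 = S 0 := by simp [S]
      _ ≤ Φ := le_partialSups_of_le S (Nat.zero_le N)
  have hTΦi : Integrable (T Φ) μ :=
    memLp_one_iff_integrable.1 ⟨(hmeas Φ hΦm).aestronglyMeasurable,
      (hL1 Φ (memLp_one_iff_integrable.2 hΦi)).trans_lt (memLp_one_iff_integrable.2 hΦi).2⟩
  have hΦ_le : ∀ᵐ x ∂μ, x ∈ F → Φ x ≤ h x + T Φ x :=
    ae_partialSups_sum_pow_apply_le_add hpos h N
  have hF : MeasurableSet F := measurableSet_lt measurable_const hΦm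
  calc 0 ≤ ∫ x, Φ x ∂μ - ∫ x, ‖T Φ x‖ ∂μ := by
        refine sub_nonneg.2 ((integral_norm_le_of_eLpNorm_one_le hTΦi.1 hΦi
          (hL1 Φ (memLp_one_iff_integrable.2 hΦi))).trans_eq ?_)
        exact integral_congr_ae (ae_of_all _ fun x => Real.norm_of_nonneg (hΦ_nonneg x))
    _ ≤ ∫ x in F, Φ x ∂μ - ∫ x in F, T Φ x ∂μ := by
        rw [setIntegral_eq_integral_of_forall_compl_eq_zero (s := F) fun x hx =>
          le_antisymm (not_lt.1 hx) (hΦ_nonneg x)]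
        gcongr
        exact (Real.le_norm_self _).trans <| (norm_integral_le_integral_norm _).trans <|
          setIntegral_le_integral hTΦi.norm (ae_of_all _ fun _ => norm_nonneg _)
    _ = ∫ x in F, (Φ x - T Φ x) ∂μ := (integral_sub hΦi.integrableOn hTΦi.integrableOn).symm
    _ ≤ ∫ x in F, h x ∂μ := setIntegral_mono_on_ae (hΦi.integrableOn.sub hTΦi.integrableOn)
        hi.integrableOn hF (by filter_upwards [hΦ_le] with x hx hxF; linarith [hx hxF])

theorem mul_measureReal_le_integral_of_lt_sum_pow_apply
    (hmeas : ∀ f, Measurable f → Measurable (T f))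
    (hL1 : ∀ f, MemLp f 1 μ → eLpNorm (T f) 1 μ ≤ eLpNorm f 1 μ)
    (hLinf : ∀ f, MemLp f ⊤ μ → eLpNorm (T f) ⊤ μ ≤ eLpNorm f ⊤ μ)
    (hpos : ∀ f : Ω → ℝ, (∀ᵐ x ∂μ, 0 ≤ f x) → ∀ᵐ x ∂μ, 0 ≤ T f x)
    {g : Ω → ℝ} (hgm : Measurable g) (hgi : Integrable g μ) (hg0 : 0 ≤ᵐ[μ] g)
    {l : ℝ} (hl : 0 ≤ l) {N : ℕ} {E : Set Ω} (hE : MeasurableSet E) (hEfin : μ E ≠ ⊤)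
    (hEg : ∀ x ∈ E, ∃ n ≤ N, l * (n + 1) < (∑ k ∈ range (n + 1), T ^ k) g x) :
    l * μ.real E ≤ ∫ x, g x ∂μ := by
  set χ : Ω → ℝ := E.indicator 1
  have hχm : Measurable χ := measurable_const.indicator hE
  have hχi : Integrable χ μ := (integrable_indicator_iff hE).2 (integrableOn_const hEfin)
  set S := fun n => (∑ k ∈ range n, T ^ k) (g - l • χ)
  set F := {x | 0 < partialSups S (N + 1) x}
  have hEF : ∀ᵐ x ∂μ, x ∈ E → x ∈ F := by
    filter_upwards [ae_sum_pow_apply_le hmeas hLinf hχm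
      fun x => by by_cases hx : x ∈ E <;> simp [χ, hx]] with x hχx hxE
    obtain ⟨n, hnN, hn⟩ := hEg x hxE
    have hSn : 0 < S (n + 1) x := by
      have := mul_le_mul_of_nonneg_left (hχx (n + 1)) hl
      simp only [S, map_sub, map_smul, Pi.sub_apply, Pi.smul_apply, smul_eq_mul]
      rw [Nat.cast_add_one] at this
      linarith
    exact hSn.trans_le (le_partialSups_of_le S (by omega : n + 1 ≤ N + 1) x)
  have hFE : μ.real (F ∩ E) = μ.real E := by
    refine congrArg ENNReal.toReal (le_antisymm (measure_mono inter_subset_right) ?_)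
    exact EventuallyLE.measure_le (by filter_upwards [hEF] with x hx hxE using ⟨hx hxE, hxE⟩)
  have hopf := hopf_maximal_ergodic hmeas hL1 hpos (hgm.sub (hχm.const_smul l))
    (hgi.sub (hχi.smul l)) (N + 1)
  have hsplit : ∫ x in F, (g - l • χ) x ∂μ = ∫ x in F, g x ∂μ - l * μ.real E := by
    simp only [Pi.sub_apply, Pi.smul_apply, smul_eq_mul]
    rw [integral_sub hgi.integrableOn (hχi.const_mul l).integrableOn, integral_const_mul,
      setIntegral_indicator hE, Pi.one_def, setIntegral_const, hFE, smul_eq_mul, mul_one]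
  calc l * μ.real E ≤ ∫ x in F, g x ∂μ := by linarith
    _ ≤ ∫ x, g x ∂μ := setIntegral_le_integral hgi hg0

end Operator

def IsDS.toEnd {μ : Measure Ω} {T : (Ω → ℝ) → Ω → ℝ} (hT : IsDS μ T) :
    Module.End ℝ (Ω → ℝ) where
  toFun := T
  map_add' := hT.1
  map_smul' := hT.2.1

theorem IsDS.measure_exists_lt_cesaro_le {μ : Measure Ω} {T : (Ω → ℝ) → Ω → ℝ} (hT : IsDS μ T)
    (hpos : ∀ f : Ω → ℝ, (∀ᵐ x ∂μ, 0 ≤ f x) → ∀ᵐ x ∂μ, 0 ≤ T f x)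
    {g : Ω → ℝ} (hgm : Measurable g) (hgi : Integrable g μ) (hg0 : 0 ≤ᵐ[μ] g)
    {l : ℝ} (hl : 0 < l) (N : ℕ) :
    μ {x | ∃ n ≤ N, l < cesaro T (n + 1) g x} ≤ ENNReal.ofReal ((∫ x, g x ∂μ) / l) := by
  have hcesaro (n : ℕ) : cesaro T (n + 1) g =
      fun x => (∑ k ∈ range (n + 1), hT.toEnd ^ k) g x / (n + 1 : ℕ) :=
    cesaro_eq_sum_pow_apply hT.toEnd (n + 1) g
  have hE : {x | ∃ n ≤ N, l < cesaro T (n + 1) g x} =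
      ⋃ n ∈ Set.Iic N, {x | l < cesaro T (n + 1) g x} := by
    ext x
    simp
  have hmeas_n (n : ℕ) : Measurable (cesaro T (n + 1) g) := by
    rw [hcesaro]
    exact (measurable_sum_pow_apply (T := hT.toEnd) hT.2.2.1 hgm _).div_const _
  have hint_n (n : ℕ) : Integrable (cesaro T (n + 1) g) μ := by
    rw [hcesaro]
    exact (integrable_sum_pow_apply (T := hT.toEnd) hT.2.2.1 hT.2.2.2.1 hgm hgi _).div_const _
  have hEm : MeasurableSet {x | ∃ n ≤ N, l < cesaro T (n + 1) g x} := by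
    rw [hE]
    exact MeasurableSet.biUnion (to_countable _) fun n _ =>
      measurableSet_lt measurable_const (hmeas_n n)
  have hEfin : μ {x | ∃ n ≤ N, l < cesaro T (n + 1) g x} < ⊤ := by
    rw [hE]
    exact measure_biUnion_lt_top (Set.finite_Iic N) fun n _ => (hint_n n).measure_gt_lt_top hl
  have hEg : ∀ x ∈ {x | ∃ n ≤ N, l < cesaro T (n + 1) g x},
      ∃ n ≤ N, l * (n + 1) < (∑ k ∈ range (n + 1), hT.toEnd ^ k) g x := by
    rintro x ⟨n, hnN, hn⟩
    refine ⟨n, hnN, ?_⟩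
    rwa [hcesaro, lt_div_iff₀ (by positivity), Nat.cast_add_one] at hn
  have key := mul_measureReal_le_integral_of_lt_sum_pow_apply (T := hT.toEnd) hT.2.2.1
    hT.2.2.2.1 hT.2.2.2.2 hpos hgm hgi hg0 hl.le hEm hEfin.ne hEg
  rw [← ENNReal.ofReal_toReal hEfin.ne]
  exact ENNReal.ofReal_le_ofReal ((le_div_iff₀' hl).2 key)

theorem stmt5_general (μ : Measure Ω) (T : (Ω → ℝ) → Ω → ℝ)
    (hT : IsDS μ T)
    (hpos : ∀ f : Ω → ℝ, (∀ᵐ x ∂μ, 0 ≤ f x) → ∀ᵐ x ∂μ, 0 ≤ T f x)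
    (f : Ω → ℝ) (hf : Measurable f) (hf1 : MemLp f 1 μ) (l : ℝ) (hl : 0 < l) :
    μ {x | ∃ n : ℕ, l < cesaro T (n + 1) (fun y => |f y|) x} ≤
      eLpNorm f 1 μ / ENNReal.ofReal l := by
  set A := fun N : ℕ => {x | ∃ n ≤ N, l < cesaro T (n + 1) (fun y => |f y|) x}
  have hA : Monotone A := fun N M hNM x ⟨n, hn, hx⟩ => ⟨n, hn.trans hNM, hx⟩
  have hU : {x | ∃ n : ℕ, l < cesaro T (n + 1) (fun y => |f y|) x} = ⋃ N, A N := by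
    ext x
    simp only [A, mem_iUnion]
    exact ⟨fun ⟨n, hn⟩ => ⟨n, n, le_rfl, hn⟩, fun ⟨_, n, _, hn⟩ => ⟨n, hn⟩⟩
  have hnorm : ENNReal.ofReal (∫ x, |f x| ∂μ) = eLpNorm f 1 μ := by
    rw [← ofReal_lpNorm hf1, lpNorm_one_eq_integral_norm hf1.1]
    rfl
  rw [hU, hA.measure_iUnion, ← hnorm, ← ENNReal.ofReal_div_of_pos hl]
  exact iSup_le fun N => hT.measure_exists_lt_cesaro_le hpos hf.abs
    (memLp_one_iff_integrable.1 hf1).abs (ae_of_all _ fun x => abs_nonneg (f x)) hl N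

/-- maximal inequality for a positive Dunford-Schwartz operator on `L¹`:
`μ{sup_{n≥1} M_n(T)(|f|) > λ} ≤ ‖f‖₁/λ`. -/
theorem stmt5 (μ : Measure Ω) [SigmaFinite μ] (T : (Ω → ℝ) → Ω → ℝ)
    (hT : IsDS μ T)
    (hpos : ∀ f : Ω → ℝ, (∀ᵐ x ∂μ, 0 ≤ f x) → ∀ᵐ x ∂μ, 0 ≤ T f x)
    (f : Ω → ℝ) (hf : Measurable f) (hf1 : MemLp f 1 μ) (l : ℝ) (hl : 0 < l) :
    μ {x | ∃ n : ℕ, l < cesaro T (n + 1) (fun y => |f y|) x} ≤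
      eLpNorm f 1 μ / ENNReal.ofReal l :=
  stmt5_general μ T hT hpos f hf hf1 l hl
end

section
/- Let (Ω,𝒜,μ) be a σ-finite measure space and let T : L²(Ω) → L²(Ω) be a linear contraction (‖T f‖₂ ≤ ‖f‖₂ for all f ∈ L²). Then the set D = { g + (T(h) − h) : g ∈ L²(Ω), T(g) = g, h ∈ L²(Ω) ∩ L^∞(Ω) } is dense in L²(Ω). -/
/-!
A vector `f` orthogonal to every fixed point of `T` and to every `T h - h` with `h` bounded is,
by density of the bounded functions and continuity of `T`, orthogonal to `T h - h` for all `h`.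
Taking `h = f` gives `⟪T f, f⟫ = ‖f‖²`, which together with `‖T f‖ ≤ ‖f‖` forces
`‖T f - f‖² ≤ 0`. So `f` is itself a fixed point, hence orthogonal to itself, hence zero.
-/

open MeasureTheory Filter Set
open scoped ENNReal Topology

variable {Ω : Type*} [MeasurableSpace Ω]

open scoped RealInnerProductSpace

section Hilbert

variable {E : Type*} [NormedAddCommGroup E] [InnerProductSpace ℝ E]

theorem eq_of_norm_le_of_inner_eq_norm_sq {x y : E} (hxy : ‖x‖ ≤ ‖y‖) (h : ⟪x, y⟫ = ‖y‖ ^ 2) :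
    x = y := by
  have : ‖x - y‖ ^ 2 ≤ 0 := by
    rw [norm_sub_sq_real, h]
    nlinarith [norm_nonneg x]
  rw [← sub_eq_zero, ← norm_eq_zero]
  nlinarith [norm_nonneg (x - y)]

theorem dense_ker_sub_one_sup_map_sub_one [CompleteSpace E] (T : E →ₗ[ℝ] E)
    (hT : ∀ x, ‖T x‖ ≤ ‖x‖) {V : Submodule ℝ E} (hV : Dense (V : Set E)) :
    Dense ((LinearMap.ker (T - 1) ⊔ V.map (T - 1) : Submodule ℝ E) : Set E) := by
  rw [Submodule.dense_iff_topologicalClosure_eq_top, Submodule.topologicalClosure_eq_top_iff,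
    Submodule.eq_bot_iff]
  intro f hf
  have hT_cont : Continuous T := AddMonoidHomClass.continuous_of_bound T 1 (by simpa using hT)
  have h_range : ∀ h, ⟪T h - h, f⟫ = 0 := by
    have hclosed : IsClosed {h | ⟪T h - h, f⟫ = 0} :=
      isClosed_eq ((hT_cont.sub continuous_id).inner continuous_const) continuous_const
    refine fun h => hclosed.closure_subset_iff.mpr (fun h hh => ?_) (hV h)
    exact hf _ (Submodule.mem_sup_right ⟨h, hh, rfl⟩)
  have hTf : T f = f := by
    refine eq_of_norm_le_of_inner_eq_norm_sq (hT f) ?_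
    rw [← real_inner_self_eq_norm_sq, ← sub_eq_zero, ← inner_sub_left]
    exact h_range f
  have hf_ker : f ∈ LinearMap.ker (T - 1) := by simp [hTf]
  exact inner_self_eq_zero.mp (hf f (Submodule.mem_sup_left hf_ker))

end Hilbert

namespace MeasureTheory.Lp

variable {𝕜 E : Type*} [NormedField 𝕜] [NormedAddCommGroup E]
  [NormedSpace 𝕜 E] (p : ℝ≥0∞) (μ : Measure Ω)

def boundedSubmodule : Submodule 𝕜 (Lp E p μ) where
  carrier := {f | MemLp f ⊤ μ}
  add_mem' {f g} hf hg := (hf.add hg).ae_eq (Lp.coeFn_add f g).symm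
  zero_mem' := MemLp.zero.ae_eq (Lp.coeFn_zero E p μ).symm
  smul_mem' c f hf := (hf.const_smul c).ae_eq (Lp.coeFn_smul c f).symm

theorem dense_boundedSubmodule [Fact (1 ≤ p)] (hp : p ≠ ∞) :
    Dense (boundedSubmodule (𝕜 := 𝕜) (E := E) p μ : Set (Lp E p μ)) := by
  refine (simpleFunc.dense hp).mono ?_
  rintro f ⟨s, hs⟩
  have hfs : f =ᵐ[μ] s := by
    rw [← hs]
    exact AEEqFun.coeFn_mk _ _
  exact (s.memLp_top μ).ae_eq hfs.symm

end MeasureTheory.Lp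

theorem stmt9_general (μ : Measure Ω) (T : Lp ℝ 2 μ →ₗ[ℝ] Lp ℝ 2 μ)
    (hT : ∀ f : Lp ℝ 2 μ, ‖T f‖ ≤ ‖f‖) :
    Dense {x : Lp ℝ 2 μ | ∃ g h : Lp ℝ 2 μ,
      T g = g ∧ MemLp (⇑h) ⊤ μ ∧ x = g + (T h - h)} := by
  convert dense_ker_sub_one_sup_map_sub_one T hT
    (Lp.dense_boundedSubmodule (𝕜 := ℝ) 2 μ ENNReal.ofNat_ne_top) using 1
  ext x
  simp only [Set.mem_ofPred_eq, SetLike.mem_coe, Submodule.mem_sup, LinearMap.mem_ker,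
    Submodule.mem_map, LinearMap.sub_apply, Module.End.one_apply, sub_eq_zero]
  constructor
  · rintro ⟨g, h, hg, hh, rfl⟩
    exact ⟨g, hg, _, ⟨h, hh, rfl⟩, rfl⟩
  · rintro ⟨g, hg, _, ⟨h, hh, rfl⟩, rfl⟩
    exact ⟨g, h, hg, hh, rfl⟩

/-- for a linear contraction `T` of `L²`, the set
`D = {g + (T h − h) : g ∈ L², T g = g, h ∈ L² ∩ L^∞}` is dense in `L²`. -/
theorem stmt9 (μ : Measure Ω) [SigmaFinite μ] (T : Lp ℝ 2 μ →ₗ[ℝ] Lp ℝ 2 μ)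
    (hT : ∀ f : Lp ℝ 2 μ, ‖T f‖ ≤ ‖f‖) :
    Dense {x : Lp ℝ 2 μ | ∃ g h : Lp ℝ 2 μ,
      T g = g ∧ MemLp (⇑h) ⊤ μ ∧ x = g + (T h - h)} :=
  stmt9_general μ T hT
end

section
/- On the space of real sequences, let T be the unilateral shift T((ξ₁,ξ₂,ξ₃,…)) = (0,ξ₁,ξ₂,…), and let e₁ = (1,0,0,…) ∈ ℓ¹. Then T is a Dunford–Schwartz operator on (ℕ, counting measure) and ‖M_{2n}(T)(e₁) − M_n(T)(e₁)‖_{ℓ¹} = 1 for every n ≥ 1. Consequently, the sequence (M_n(T)(e₁)) does not converge in the norm of ℓ¹. -/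
open MeasureTheory Filter Set
open scoped ENNReal Topology

variable {Ω : Type*} [MeasurableSpace Ω]

/-- The unilateral shift `T((ξ₁,ξ₂,ξ₃,…)) = (0,ξ₁,ξ₂,…)` on real sequences. -/
def seqShift : (ℕ → ℝ) → ℕ → ℝ :=
  fun ξ i => if i = 0 then 0 else ξ (i - 1)

/-- The sequence `e₁ = (1,0,0,…)`. -/
def eOne : ℕ → ℝ := fun i => if i = 0 then 1 else 0

/-!
Since `T^k e₁ = e_{k+1}`, the average `M_n(T) e₁` is `1/n` on the first `n` coordinates and `0`
beyond, so `M_{2n}(T) e₁ - M_n(T) e₁` has absolute value `1/(2n)` on `2n` coordinates and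
`ℓ¹`-norm `1`. An `ℓ¹`-convergent sequence would make these differences tend to `0`.
The shift itself is an `ℓ¹`-isometry and an `ℓ^∞`-contraction.
-/

lemma eLpNorm_one_count {α E : Type*} [MeasurableSpace α] [MeasurableSingletonClass α]
    [NormedAddCommGroup E] (f : α → E) :
    eLpNorm f 1 (Measure.count : Measure α) = ∑' i, ‖f i‖ₑ := by
  rw [eLpNorm_one_eq_lintegral_enorm, lintegral_count]

lemma tendsto_eLpNorm_sub_of_tendsto_eLpNorm {α E ι κ : Type*} [MeasurableSpace α]
    {μ : Measure α} [NormedAddCommGroup E] {p : ℝ≥0∞} (hp : 1 ≤ p) {F : ι → α → E}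
    {g : α → E} (hF : ∀ i, AEStronglyMeasurable (F i) μ) (hg : AEStronglyMeasurable g μ)
    {l : Filter ι} (h : Tendsto (fun i => eLpNorm (F i - g) p μ) l (𝓝 0))
    {l' : Filter κ} {u v : κ → ι} (hu : Tendsto u l' l) (hv : Tendsto v l' l) :
    Tendsto (fun j => eLpNorm (F (u j) - F (v j)) p μ) l' (𝓝 0) := by
  have hbound : ∀ j, eLpNorm (F (u j) - F (v j)) p μ
      ≤ eLpNorm (F (u j) - g) p μ + eLpNorm (F (v j) - g) p μ := fun j => by
    rw [← sub_sub_sub_cancel_right (F (u j)) (F (v j)) g]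
    exact eLpNorm_sub_le ((hF _).sub hg) ((hF _).sub hg) hp
  refine tendsto_of_tendsto_of_tendsto_of_le_of_le tendsto_const_nhds ?_
    (fun _ => zero_le) hbound
  simpa using (h.comp hu).add (h.comp hv)

lemma seqShift_iterate_eOne (k i : ℕ) : seqShift^[k] eOne i = if i = k then 1 else 0 := by
  induction k generalizing i with
  | zero => rfl
  | succ k ih =>
    rw [Function.iterate_succ_apply']
    rcases i with _ | i
    · simp [seqShift]
    · simp [seqShift, ih]

lemma cesaro_seqShift_eOne (n : ℕ) :
    cesaro seqShift n eOne = (Iio n).indicator fun _ => (n : ℝ)⁻¹ := by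
  ext i
  simp only [cesaro, seqShift_iterate_eOne, Finset.sum_ite_eq, Finset.mem_range,
    indicator, mem_Iio]
  split_ifs <;> simp [div_eq_inv_mul]

lemma eLpNorm_seqShift_one (f : ℕ → ℝ) :
    eLpNorm (seqShift f) 1 Measure.count = eLpNorm f 1 Measure.count := by
  rw [eLpNorm_one_count, eLpNorm_one_count, tsum_eq_zero_add' ENNReal.summable]
  simp [seqShift]

lemma eLpNorm_seqShift_top_le (f : ℕ → ℝ) :
    eLpNorm (seqShift f) ⊤ Measure.count ≤ eLpNorm f ⊤ Measure.count := by
  simp only [eLpNorm_exponent_top, eLpNormEssSup_count]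
  refine iSup_le fun i => ?_
  rcases i with _ | i
  · simp [seqShift]
  · simpa [seqShift] using le_iSup (fun j => ‖f j‖ₑ) i

lemma isDS_seqShift : IsDS (Measure.count : Measure ℕ) seqShift := by
  refine ⟨fun f g => ?_, fun c f => ?_, fun f _ => measurable_of_countable _,
    fun f _ => (eLpNorm_seqShift_one f).le, fun f _ => eLpNorm_seqShift_top_le f⟩
  · ext i; by_cases hi : i = 0 <;> simp [seqShift, hi]
  · ext i; by_cases hi : i = 0 <;> simp [seqShift, hi]

lemma memLp_eOne : MemLp eOne 1 (Measure.count : Measure ℕ) := by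
  refine ⟨(measurable_of_countable _).aestronglyMeasurable, ?_⟩
  rw [eLpNorm_one_count, tsum_eq_single 0 fun i hi => by simp [eOne, hi]]
  simp [eOne]

lemma eLpNorm_cesaro_two_mul_sub_cesaro {n : ℕ} (hn : 1 ≤ n) :
    eLpNorm (cesaro seqShift (2 * n) eOne - cesaro seqShift n eOne) 1 Measure.count = 1 := by
  -- The difference is `-1/(2n)` on `[0, n)`, `1/(2n)` on `[n, 2n)` and `0` beyond.
  have hnorm : ∀ i, ‖(cesaro seqShift (2 * n) eOne - cesaro seqShift n eOne) i‖
      = ‖(Iio (2 * n)).indicator (fun _ => ((2 * n : ℕ) : ℝ)⁻¹) i‖ := fun i => by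
    simp only [cesaro_seqShift_eOne, Pi.sub_apply, indicator, mem_Iio]
    push_cast
    split_ifs <;> first | omega | (field_simp; norm_num [abs_of_pos])
  rw [eLpNorm_congr_norm_ae (Eventually.of_forall hnorm), eLpNorm_indicator_const measurableSet_Iio
    one_ne_zero ENNReal.one_ne_top, ← Finset.coe_range, Measure.count_apply_finset, Finset.card_range, ENNReal.toReal_one,
    div_one, ENNReal.rpow_one, enorm_inv (by positivity), Real.enorm_natCast,
    ENNReal.inv_mul_cancel (by positivity) (ENNReal.natCast_ne_top _)]

/-- the unilateral shift is a Dunford-Schwartz operator on `(ℕ, count)`,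
`e₁ ∈ ℓ¹`, `‖M_{2n}(T)(e₁) − M_n(T)(e₁)‖_{ℓ¹} = 1` for all `n ≥ 1`, and hence
`(M_n(T)(e₁))` does not converge in `ℓ¹`. -/
theorem stmt14 :
    IsDS (Measure.count : Measure ℕ) seqShift ∧
    MemLp eOne 1 (Measure.count : Measure ℕ) ∧
    (∀ n : ℕ, 1 ≤ n →
      eLpNorm (cesaro seqShift (2 * n) eOne - cesaro seqShift n eOne) 1
        (Measure.count : Measure ℕ) = 1) ∧
    ¬ ∃ g : ℕ → ℝ, Tendsto (fun n =>
        eLpNorm (cesaro seqShift (n + 1) eOne - g) 1 (Measure.count : Measure ℕ))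
      atTop (𝓝 0) := by
  refine ⟨isDS_seqShift, memLp_eOne, fun n => eLpNorm_cesaro_two_mul_sub_cesaro, ?_⟩
  rintro ⟨g, hg⟩
  have hmeas : ∀ f : ℕ → ℝ, AEStronglyMeasurable f Measure.count :=
    fun f => (measurable_of_countable f).aestronglyMeasurable
  have hu : Tendsto (fun n : ℕ => 2 * n + 1) atTop atTop :=
    tendsto_atTop_mono (fun n => by simp only [id]; omega) tendsto_id
  have hcauchy := tendsto_eLpNorm_sub_of_tendsto_eLpNorm le_rfl (fun _ => hmeas _) (hmeas g) hg
    hu tendsto_id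
  have hone : ∀ n : ℕ, eLpNorm (cesaro seqShift (2 * n + 1 + 1) eOne - cesaro seqShift (n + 1) eOne)
      1 Measure.count = 1 := fun n => eLpNorm_cesaro_two_mul_sub_cesaro (n := n + 1) le_add_self
  simp only [id, hone] at hcauchy
  exact one_ne_zero (tendsto_nhds_unique tendsto_const_nhds hcauchy)
end

section
/- Let (Ω,𝒜,μ) be a σ-finite infinite measure space and let T be a Dunford–Schwartz operator on (Ω,μ). For f ∈ R_μ let P(f) denote the almost uniform limit of the Cesàro averages M_n(T)(f). Then for every f ∈ R_μ, ‖M_n(T)(f) − P(f)‖_{L¹+L^∞} → 0 as n → ∞. -/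
open MeasureTheory Filter Set
open scoped ENNReal Topology

variable {Ω : Type*} [MeasurableSpace Ω]

/-- The norm of `L¹(μ) + L^∞(μ)`:
`‖f‖ = inf{‖g‖₁ + ‖h‖_∞ : f = g + h, g ∈ L¹, h ∈ L^∞}`. -/
noncomputable def normL1PlusLinf (μ : Measure Ω) (f : Ω → ℝ) : ℝ≥0∞ :=
  ⨅ (g : Ω → ℝ) (h : Ω → ℝ) (_ : MemLp g 1 μ) (_ : MemLp h ⊤ μ) (_ : f = g + h),
    eLpNorm g 1 μ + eLpNorm h ⊤ μ

/-!
On a set of large measure the averages converge uniformly, which controls the `L^∞` part of the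
norm. On the small exceptional set we need `L¹` control uniformly in `n`: writing `f` as a bounded
part plus a part of small `L¹`-norm, the `L^∞`- and `L¹`-contractivity of `T` carry this splitting
over to every Cesàro average, so the averages are uniformly integrable. Fatou's lemma passes the
resulting bound to the limit `P(f)`.
-/

section Cesaro

variable {α : Type*} {T : (α → ℝ) → α → ℝ}

theorem iterate_add_of_map_add (hadd : ∀ f g : α → ℝ, T (f + g) = T f + T g) (k : ℕ)
    (f g : α → ℝ) : T^[k] (f + g) = T^[k] f + T^[k] g := by
  induction k with
  | zero => rfl
  | succ k ih =>
    rw [Function.iterate_succ_apply', Function.iterate_succ_apply',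
      Function.iterate_succ_apply', ih, hadd]

theorem cesaro_add (hadd : ∀ f g : α → ℝ, T (f + g) = T f + T g) (n : ℕ) (f g : α → ℝ) :
    cesaro T n (f + g) = cesaro T n f + cesaro T n g := by
  funext x
  simp only [cesaro, iterate_add_of_map_add hadd, Pi.add_apply, Finset.sum_add_distrib, add_div]

theorem cesaro_eq_smul_sum (n : ℕ) (f : α → ℝ) :
    cesaro T n f = (n : ℝ)⁻¹ • ∑ k ∈ Finset.range n, T^[k] f := by
  funext x
  simp [cesaro, div_eq_inv_mul, Finset.sum_apply]

variable [MeasurableSpace α]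

theorem measurable_iterate (hT : ∀ f : α → ℝ, Measurable f → Measurable (T f)) {f : α → ℝ}
    (hf : Measurable f) (k : ℕ) : Measurable (T^[k] f) :=
  Function.Iterate.rec Measurable hf hT k

theorem measurable_cesaro (hT : ∀ f : α → ℝ, Measurable f → Measurable (T f)) {f : α → ℝ}
    (hf : Measurable f) (n : ℕ) : Measurable (cesaro T n f) :=
  (Finset.measurable_sum _ fun k _ => measurable_iterate hT hf k).div_const _

variable {μ : Measure α} {p : ℝ≥0∞}

theorem eLpNorm_map_le (hc : ∀ f : α → ℝ, MemLp f p μ → eLpNorm (T f) p μ ≤ eLpNorm f p μ)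
    {f : α → ℝ} (hf : Measurable f) : eLpNorm (T f) p μ ≤ eLpNorm f p μ := by
  rcases (le_top : eLpNorm f p μ ≤ ⊤).lt_or_eq with hfin | htop
  · exact hc f ⟨hf.aestronglyMeasurable, hfin⟩
  · simp [htop]

theorem eLpNorm_iterate_le (hT : ∀ f : α → ℝ, Measurable f → Measurable (T f))
    (hc : ∀ f : α → ℝ, MemLp f p μ → eLpNorm (T f) p μ ≤ eLpNorm f p μ)
    {f : α → ℝ} (hf : Measurable f) (k : ℕ) :
    eLpNorm (T^[k] f) p μ ≤ eLpNorm f p μ := by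
  induction k with
  | zero => rfl
  | succ k ih =>
    rw [Function.iterate_succ_apply']
    exact (eLpNorm_map_le hc (measurable_iterate hT hf k)).trans ih

theorem eLpNorm_cesaro_le (hp : 1 ≤ p) (hT : ∀ f : α → ℝ, Measurable f → Measurable (T f))
    (hc : ∀ f : α → ℝ, MemLp f p μ → eLpNorm (T f) p μ ≤ eLpNorm f p μ)
    {f : α → ℝ} (hf : Measurable f) (n : ℕ) :
    eLpNorm (cesaro T n f) p μ ≤ eLpNorm f p μ := by
  rw [cesaro_eq_smul_sum, eLpNorm_const_smul]
  rcases Nat.eq_zero_or_pos n with rfl | hn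
  · simp
  have hsum : eLpNorm (∑ k ∈ Finset.range n, T^[k] f) p μ ≤ n * eLpNorm f p μ :=
    calc eLpNorm (∑ k ∈ Finset.range n, T^[k] f) p μ
        ≤ ∑ k ∈ Finset.range n, eLpNorm (T^[k] f) p μ :=
          eLpNorm_sum_le (fun k _ => (measurable_iterate hT hf k).aestronglyMeasurable) hp
      _ ≤ n * eLpNorm f p μ := by
          simpa using Finset.sum_le_card_nsmul (Finset.range n) _ _ fun k _ =>
            eLpNorm_iterate_le hT hc hf k
  calc ‖(n : ℝ)⁻¹‖ₑ * eLpNorm (∑ k ∈ Finset.range n, T^[k] f) p μ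
      ≤ (n : ℝ≥0∞)⁻¹ * (n * eLpNorm f p μ) := by
        rw [enorm_inv (by simp [hn.ne']), Real.enorm_natCast]
        gcongr
    _ = eLpNorm f p μ := by
        rw [← mul_assoc, ENNReal.inv_mul_cancel (by simp [hn.ne']) (by simp), one_mul]

end Cesaro

section Decomposition

variable {α : Type*} [MeasurableSpace α] {μ : Measure α} {f : α → ℝ}

theorem MemL1PlusLinf.exists_measurable_add (hf : MemL1PlusLinf μ f) (hfm : Measurable f) :
    ∃ g h : α → ℝ, Measurable g ∧ Measurable h ∧ MemLp g 1 μ ∧ MemLp h ⊤ μ ∧ f = g + h := by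
  obtain ⟨a, b, ha, hb, rfl⟩ := hf
  refine ⟨ha.1.mk a, a + b - ha.1.mk a, ha.1.stronglyMeasurable_mk.measurable,
    hfm.sub ha.1.stronglyMeasurable_mk.measurable, ha.ae_eq ha.1.ae_eq_mk, hb.ae_eq ?_, by abel⟩
  filter_upwards [ha.1.ae_eq_mk] with x hx
  simp [hx]

theorem MemL1PlusLinf.exists_bounded_add_small (hf : MemL1PlusLinf μ f) (hfm : Measurable f)
    {δ : ℝ} (hδ : 0 < δ) :
    ∃ u v : α → ℝ, Measurable u ∧ Measurable v ∧ MemLp u ⊤ μ ∧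
      eLpNorm v 1 μ ≤ ENNReal.ofReal δ ∧ f = u + v := by
  obtain ⟨g, h, hgm, hhm, hg, hh, rfl⟩ := hf.exists_measurable_add hfm
  obtain ⟨M, hM⟩ := hg.eLpNorm_indicator_norm_ge_le hgm.stronglyMeasurable hδ
  set s := {x | M ≤ ‖g x‖₊}
  have hs : MeasurableSet s := measurableSet_le measurable_const hgm.nnnorm.subtype_coe
  have hbdd : ∀ x, ‖sᶜ.indicator g x‖ ≤ |M| := by
    intro x
    by_cases hx : x ∈ s
    · simp [hx]
    · simp only [indicator_of_mem (show x ∈ sᶜ from hx)]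
      exact (not_le.1 hx).le.trans (le_abs_self M)
  refine ⟨h + sᶜ.indicator g, s.indicator g, hhm.add (hgm.indicator hs.compl),
    hgm.indicator hs, hh.add (memLp_top_of_bound (hgm.indicator hs.compl).aestronglyMeasurable _
      (Eventually.of_forall hbdd)), hM, ?_⟩
  rw [add_assoc, indicator_compl_add_self, add_comm]

end Decomposition

section Convergence

variable {α : Type*} [MeasurableSpace α] {μ : Measure α}

theorem normL1PlusLinf_le {u g h : α → ℝ} (hg : AEStronglyMeasurable g μ)
    (hh : AEStronglyMeasurable h μ) (hu : u = g + h) :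
    normL1PlusLinf μ u ≤ eLpNorm g 1 μ + eLpNorm h ⊤ μ := by
  by_cases hfin : eLpNorm g 1 μ < ⊤ ∧ eLpNorm h ⊤ μ < ⊤
  · exact iInf₂_le_of_le g h (iInf₂_le_of_le ⟨hg, hfin.1⟩ ⟨hh, hfin.2⟩ (iInf_le _ hu))
  · rw [not_and_or, not_lt, not_lt, top_le_iff, top_le_iff] at hfin
    rcases hfin with htop | htop <;> simp [htop]

theorem eLpNorm_one_indicator_le {E : Type*} [NormedAddCommGroup E] {g : α → E} {s : Set α}
    (hs : MeasurableSet s) (hg : AEStronglyMeasurable g μ) :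
    eLpNorm (s.indicator g) 1 μ ≤ eLpNorm g ⊤ μ * μ s := by
  rw [eLpNorm_indicator_eq_eLpNorm_restrict hs]
  calc eLpNorm g 1 (μ.restrict s)
      ≤ eLpNorm g ⊤ (μ.restrict s) *
          μ.restrict s univ ^ (1 / (1 : ℝ≥0∞).toReal - 1 / (⊤ : ℝ≥0∞).toReal) :=
        eLpNorm_le_eLpNorm_mul_rpow_measure_univ le_top hg.restrict
    _ ≤ eLpNorm g ⊤ μ * μ s := by
        simp only [ENNReal.toReal_one, ENNReal.toReal_top, div_zero, sub_zero, div_one,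
          ENNReal.rpow_one, Measure.restrict_apply_univ]
        gcongr
        exact Measure.restrict_le_self

theorem unifIntegrable_of_forall_bounded_add_small {ι E : Type*} [NormedAddCommGroup E]
    {F : ι → α → E}
    (hF : ∀ δ : ℝ, 0 < δ → ∃ C : ℝ≥0∞, C ≠ ⊤ ∧ ∀ i, ∃ U V : α → E,
      AEStronglyMeasurable U μ ∧ AEStronglyMeasurable V μ ∧ eLpNorm U ⊤ μ ≤ C ∧
        eLpNorm V 1 μ ≤ ENNReal.ofReal δ ∧ F i = U + V) :
    UnifIntegrable F 1 μ := by
  intro ε hε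
  obtain ⟨C, hC, hdecomp⟩ := hF (ε / 2) (half_pos hε)
  set δ := ε / 2 / (C.toReal + 1)
  have hCδ : C * ENNReal.ofReal δ ≤ ENNReal.ofReal (ε / 2) := by
    rw [← ENNReal.ofReal_toReal hC, ← ENNReal.ofReal_mul ENNReal.toReal_nonneg]
    refine ENNReal.ofReal_le_ofReal ?_
    rw [mul_div_assoc', div_le_iff₀ (by positivity)]
    nlinarith [ENNReal.toReal_nonneg (a := C)]
  refine ⟨δ, by positivity, fun i s hs hμs => ?_⟩
  obtain ⟨U, V, hU, hV, hUC, hVδ, hFi⟩ := hdecomp i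
  calc eLpNorm (s.indicator (F i)) 1 μ
      = eLpNorm (s.indicator U + s.indicator V) 1 μ := by rw [hFi, indicator_add']
    _ ≤ eLpNorm (s.indicator U) 1 μ + eLpNorm (s.indicator V) 1 μ :=
        eLpNorm_add_le (hU.indicator hs) (hV.indicator hs) le_rfl
    _ ≤ C * ENNReal.ofReal δ + ENNReal.ofReal (ε / 2) := by
        gcongr
        · exact (eLpNorm_one_indicator_le hs hU).trans (by gcongr)
        · exact (eLpNorm_indicator_le V).trans hVδ
    _ ≤ ENNReal.ofReal (ε / 2) + ENNReal.ofReal (ε / 2) := by gcongr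
    _ = ENNReal.ofReal ε := by
        rw [← ENNReal.ofReal_add (by positivity) (by positivity), add_halves]

theorem ae_tendsto_zero_of_tendsto_eLpNorm_top {E : Type*} [NormedAddCommGroup E]
    {g : ℕ → α → E} (hg : Tendsto (fun n => eLpNorm (g n) ⊤ μ) atTop (𝓝 0)) :
    ∀ᵐ x ∂μ, Tendsto (fun n => g n x) atTop (𝓝 0) := by
  filter_upwards [ae_all_iff.2 fun n => ae_le_eLpNormEssSup (f := g n) (μ := μ)] with x hx
  rw [tendsto_zero_iff_enorm_tendsto_zero]
  simp only [← eLpNorm_exponent_top] at hx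
  exact tendsto_of_tendsto_of_tendsto_of_le_of_le tendsto_const_nhds hg (fun _ => zero_le) hx

theorem TendstoAU.ae_tendsto {F : ℕ → α → ℝ} {G : α → ℝ} (hFG : TendstoAU μ F G) :
    ∀ᵐ x ∂μ, Tendsto (fun n => F n x) atTop (𝓝 (G x)) := by
  choose E hEm hEμ hEt using fun k : ℕ => hFG (1 / (k + 1)) Nat.one_div_pos_of_nat
  have hcover : ∀ᵐ x ∂μ, ∃ k, x ∈ E k := by
    have hnull : ∀ k : ℕ, μ {x | ¬∃ k, x ∈ E k} ≤ ENNReal.ofReal (1 / (k + 1)) := fun k =>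
      (measure_mono fun x hx => by simpa using (not_exists.1 hx k)).trans (hEμ k)
    have hlim : Tendsto (fun k : ℕ => ENNReal.ofReal (1 / (k + 1))) atTop (𝓝 0) := by
      simpa using ENNReal.tendsto_ofReal tendsto_one_div_add_atTop_nhds_zero_nat
    exact ae_iff.2 (le_antisymm (ge_of_tendsto' hlim hnull) zero_le)
  have hconv : ∀ᵐ x ∂μ, ∀ k, x ∈ E k → Tendsto (fun n => F n x) atTop (𝓝 (G x)) := by
    refine ae_all_iff.2 fun k => (ae_tendsto_zero_of_tendsto_eLpNorm_top (hEt k)).mono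
      fun x hx hxE => ?_
    simp only [indicator_of_mem hxE, Pi.sub_apply] at hx
    exact tendsto_sub_nhds_zero_iff.1 (by simpa using hx.neg)
  filter_upwards [hcover, hconv] with x ⟨k, hk⟩ hx using hx k hk

theorem tendsto_normL1PlusLinf_of_tendstoAU {F : ℕ → α → ℝ} {G : α → ℝ}
    (hF : ∀ n, AEStronglyMeasurable (F n) μ) (hUI : UnifIntegrable F 1 μ)
    (hFG : TendstoAU μ F G) :
    Tendsto (fun n => normL1PlusLinf μ (F n - G)) atTop (𝓝 0) := by
  have hae := hFG.ae_tendsto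
  have hG : AEStronglyMeasurable G μ := aestronglyMeasurable_of_tendsto_ae atTop hF hae
  rw [ENNReal.tendsto_nhds_zero]
  intro ε hε
  have hε3 : 0 < ε / 3 := ENNReal.div_pos hε.ne' ENNReal.ofNat_ne_top
  obtain ⟨η, hη, hηε⟩ : ∃ η : ℝ, 0 < η ∧ ENNReal.ofReal η ≤ ε / 3 := by
    obtain ⟨η, -, hη, hηε⟩ := ENNReal.lt_iff_exists_real_btwn.1 hε3
    exact ⟨η, ENNReal.ofReal_pos.1 hη, hηε.le⟩
  obtain ⟨δ, hδ, hUIδ⟩ := hUI hη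
  obtain ⟨E, hE, hEc, hEt⟩ := hFG δ hδ
  have hFc : ∀ n, eLpNorm (Eᶜ.indicator (F n)) 1 μ ≤ ENNReal.ofReal η :=
    fun n => hUIδ n Eᶜ hE.compl hEc
  have hGc : eLpNorm (Eᶜ.indicator G) 1 μ ≤ ENNReal.ofReal η := by
    have hae_ind : ∀ᵐ x ∂μ,
        Tendsto (fun n => Eᶜ.indicator (F n) x) atTop (𝓝 (Eᶜ.indicator G x)) := by
      filter_upwards [hae] with x hx
      by_cases hxE : x ∈ Eᶜ <;> simp [hxE, hx]
    calc eLpNorm (Eᶜ.indicator G) 1 μ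
        ≤ atTop.liminf fun n => eLpNorm (Eᶜ.indicator (F n)) 1 μ :=
          Lp.eLpNorm_lim_le_liminf_eLpNorm (fun n => (hF n).indicator hE.compl) _ hae_ind
      _ ≤ ENNReal.ofReal η := (liminf_le_liminf (.of_forall hFc)).trans_eq (liminf_const _)
  filter_upwards [ENNReal.tendsto_nhds_zero.1 hEt (ε / 3) hε3] with n hn
  calc normL1PlusLinf μ (F n - G)
      ≤ eLpNorm (Eᶜ.indicator (F n - G)) 1 μ + eLpNorm (E.indicator (F n - G)) ⊤ μ :=
        normL1PlusLinf_le (((hF n).sub hG).indicator hE.compl) (((hF n).sub hG).indicator hE)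
          (indicator_compl_add_self E _).symm
    _ ≤ (ENNReal.ofReal η + ENNReal.ofReal η) + ε / 3 := by
        gcongr
        · rw [indicator_sub']
          exact (eLpNorm_sub_le ((hF n).indicator hE.compl) (hG.indicator hE.compl) le_rfl).trans
            (add_le_add (hFc n) hGc)
        · rwa [← eLpNorm_neg, ← indicator_neg', neg_sub]
    _ ≤ ε / 3 + ε / 3 + ε / 3 := by gcongr
    _ = ε := ENNReal.add_thirds ε

end Convergence

theorem stmt15_general (μ : Measure Ω)
    (T : (Ω → ℝ) → Ω → ℝ) (hT : IsDS μ T)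
    (f : Ω → ℝ) (hf : Measurable f) (hfR : MemRmu μ f) (Pf : Ω → ℝ)
    (hP : TendstoAU μ (fun n => cesaro T (n + 1) f) Pf) :
    Tendsto (fun n => normL1PlusLinf μ (cesaro T (n + 1) f - Pf)) atTop (𝓝 0) := by
  obtain ⟨hadd, -, hmeas, hL1, hLinf⟩ := hT
  refine tendsto_normL1PlusLinf_of_tendstoAU
    (fun n => (measurable_cesaro hmeas hf _).aestronglyMeasurable) ?_ hP
  refine unifIntegrable_of_forall_bounded_add_small fun δ hδ => ?_
  obtain ⟨u, v, hu, hv, huLinf, hvL1, rfl⟩ := hfR.1.exists_bounded_add_small hf hδ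
  exact ⟨eLpNorm u ⊤ μ, huLinf.2.ne, fun n => ⟨cesaro T (n + 1) u, cesaro T (n + 1) v,
    (measurable_cesaro hmeas hu _).aestronglyMeasurable,
    (measurable_cesaro hmeas hv _).aestronglyMeasurable,
    eLpNorm_cesaro_le le_top hmeas hLinf hu _,
    (eLpNorm_cesaro_le le_rfl hmeas hL1 hv _).trans hvL1, cesaro_add hadd _ _ _⟩⟩

/-- mean ergodic theorem in `(R_μ, ‖·‖_{L¹+L^∞})`: if `P(f)` is the a.u.
limit of the Cesàro averages `M_n(T)(f)` of `f ∈ R_μ`, then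
`‖M_n(T)(f) − P(f)‖_{L¹+L^∞} → 0`. -/
theorem stmt15 (μ : Measure Ω) [SigmaFinite μ] (hμ : μ Set.univ = ⊤)
    (T : (Ω → ℝ) → Ω → ℝ) (hT : IsDS μ T)
    (f : Ω → ℝ) (hf : Measurable f) (hfR : MemRmu μ f) (Pf : Ω → ℝ)
    (hP : TendstoAU μ (fun n => cesaro T (n + 1) f) Pf) :
    Tendsto (fun n => normL1PlusLinf μ (cesaro T (n + 1) f - Pf)) atTop (𝓝 0) :=
  stmt15_general μ T hT f hf hfR Pf hP
end
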